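/- arXiv:2504.09616 — 4 statements merged into one kernel-verified Lean document; each statement's English description precedes it below -/
import Mathlib

section
/- Under the same hypotheses, if b₀ > b₁* then the solution of ḃ = f(b) converges to b₂* as t → ∞; in particular lim b(t) ≠ 0 if and only if b₀ ≥ b₁*. -/
/-!
On the phase line of an autonomous equation `ḃ = F b`, a trajectory never crosses downwards a
point where `F > 0`, nor upwards one where `F < 0`, and on a compact interval where `F` has a
fixed sign it moves with speed bounded away from zero. So a trajectory started in an interval
on which `F` changes sign once, from `+` to `-`, at `c`, converges to `c`.
Since `f x = α x (x - b₁) (b₂ - x) / (N (K + x))`, this applies at `c = b₂` on `(b₁, ∞)` and at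
`c = 0` on `(-K, b₁)`. At `b₀ = b₁` the trajectory is constant, by uniqueness of solutions:
`f` is `C¹`, hence Lipschitz on compact subintervals of `(-K, ∞)`.
-/

open Set Filter Topology NNReal

section Trajectory

variable {F b : ℝ → ℝ}

theorem trajectory_le_of_neg (hb : ∀ t, HasDerivAt b (F (b t)) t) {u t₀ t : ℝ}
    (hu : F u < 0) (h₀ : b t₀ ≤ u) (ht : t₀ ≤ t) : b t ≤ u :=
  image_le_of_deriv_right_lt_deriv_boundary (B := fun _ ↦ u) (B' := 0)
    (fun s _ ↦ (hb s).continuousAt.continuousWithinAt) (fun s _ ↦ (hb s).hasDerivWithinAt) h₀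
    (fun _ ↦ hasDerivAt_const _ _) (fun s _ hs ↦ by rwa [hs]) ⟨ht, le_rfl⟩

theorem le_trajectory_of_pos (hb : ∀ t, HasDerivAt b (F (b t)) t) {l t₀ t : ℝ}
    (hl : 0 < F l) (h₀ : l ≤ b t₀) (ht : t₀ ≤ t) : l ≤ b t :=
  image_le_of_deriv_right_lt_deriv_boundary' (f := fun _ ↦ l) (f' := 0) continuousOn_const
    (fun _ _ ↦ hasDerivWithinAt_const _ _ _) h₀
    (fun s _ ↦ (hb s).continuousAt.continuousWithinAt) (fun s _ ↦ (hb s).hasDerivWithinAt)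
    (fun s _ hs ↦ by rwa [Pi.zero_apply, ← hs]) ⟨ht, le_rfl⟩

theorem trajectory_mem_Icc (hb : ∀ t, HasDerivAt b (F (b t)) t) {l u t : ℝ}
    (hl : 0 < F l) (hu : F u < 0) (h₀ : b 0 ∈ Icc l u) (ht : 0 ≤ t) : b t ∈ Icc l u :=
  ⟨le_trajectory_of_pos hb hl h₀.1 ht, trajectory_le_of_neg hb hu h₀.2 ht⟩

theorem exists_le_trajectory_of_pos_on_Icc (hb : ∀ t, HasDerivAt b (F (b t)) t)
    {A B t₀ : ℝ} (hF : ContinuousOn F (Icc A B)) (hpos : ∀ x ∈ Icc A B, 0 < F x)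
    (hA : ∀ t ≥ t₀, A ≤ b t) : ∃ t ≥ t₀, B ≤ b t := by
  by_contra! hB
  obtain ⟨x₀, hx₀, hmin⟩ := isCompact_Icc.exists_isMinOn
    (nonempty_Icc.2 ((hA t₀ le_rfl).trans (hB t₀ le_rfl).le)) hF
  have hgrowth : ∀ t ≥ t₀, F x₀ * (t - t₀) ≤ b t - b t₀ := fun t ht ↦
    (convex_Ici t₀).mul_sub_le_image_sub_of_le_deriv
      (fun s _ ↦ (hb s).continuousAt.continuousWithinAt)
      (fun s _ ↦ (hb s).differentiableAt.differentiableWithinAt)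
      (fun s hs ↦ (hb s).deriv ▸
        hmin ⟨hA s (interior_subset hs), (hB s (interior_subset hs)).le⟩)
      t₀ self_mem_Ici t ht ht
  have hc : 0 < F x₀ := hpos x₀ hx₀
  set T := t₀ + (B - A) / F x₀
  have hT : t₀ ≤ T := le_add_of_nonneg_right
    (div_nonneg (sub_nonneg.2 ((hA t₀ le_rfl).trans (hB t₀ le_rfl).le)) hc.le)
  have := hgrowth T hT
  rw [add_sub_cancel_left, mul_div_cancel₀ _ hc.ne'] at this
  linarith [hA t₀ le_rfl, hB T hT]

theorem eventually_le_trajectory_of_pos_on_Icc (hb : ∀ t, HasDerivAt b (F (b t)) t)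
    {A B : ℝ} (hAB : A ≤ B) (hF : ContinuousOn F (Icc A B)) (hpos : ∀ x ∈ Icc A B, 0 < F x)
    (hA : ∀ t ≥ 0, A ≤ b t) : ∀ᶠ t in atTop, B ≤ b t := by
  obtain ⟨T, -, hT⟩ := exists_le_trajectory_of_pos_on_Icc hb hF hpos hA
  exact eventually_atTop.2 ⟨T, fun t ↦ le_trajectory_of_pos hb (hpos B ⟨hAB, le_rfl⟩) hT⟩

theorem eventually_trajectory_le_of_neg_on_Icc (hb : ∀ t, HasDerivAt b (F (b t)) t)
    {A B : ℝ} (hAB : A ≤ B) (hF : ContinuousOn F (Icc A B)) (hneg : ∀ x ∈ Icc A B, F x < 0)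
    (hB : ∀ t ≥ 0, b t ≤ B) : ∀ᶠ t in atTop, b t ≤ A := by
  have hb' : ∀ t, HasDerivAt (-b) ((fun y ↦ -F (-y)) ((-b) t)) t := fun t ↦ by
    simpa using (hb t).neg
  have hF' : ContinuousOn (fun y ↦ -F (-y)) (Icc (-B) (-A)) :=
    (hF.comp continuousOn_neg fun y hy ↦ ⟨le_neg.1 hy.2, neg_le.1 hy.1⟩).neg
  have := eventually_le_trajectory_of_pos_on_Icc hb' (neg_le_neg hAB) hF'
    (fun y hy ↦ neg_pos.2 (hneg _ ⟨le_neg.1 hy.2, neg_le.1 hy.1⟩))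
    (fun t ht ↦ neg_le_neg (hB t ht))
  filter_upwards [this] with t ht using neg_le_neg_iff.1 ht

theorem tendsto_trajectory_of_sign_change (hb : ∀ t, HasDerivAt b (F (b t)) t) {a c d : ℝ}
    (hF : ContinuousOn F (Ioo a d)) (hpos : ∀ x ∈ Ioo a c, 0 < F x)
    (hneg : ∀ x ∈ Ioo c d, F x < 0) (hac : a < c) (hcd : c < d) (h₀ : b 0 ∈ Ioo a d) :
    Tendsto b atTop (𝓝 c) := by
  obtain ⟨l, hal, hl⟩ := exists_between (lt_min h₀.1 hac)
  obtain ⟨u, hu, hud⟩ := exists_between (max_lt h₀.2 hcd)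
  have hlc : l < c := hl.trans_le (min_le_right _ _)
  have hcu : c < u := (le_max_right _ _).trans_lt hu
  have hbounds : ∀ t ≥ 0, b t ∈ Icc l u := fun t ↦
    trajectory_mem_Icc hb (hpos l ⟨hal, hlc⟩) (hneg u ⟨hcu, hud⟩)
      ⟨(hl.trans_le (min_le_left _ _)).le, (le_max_left _ _).trans hu.le⟩
  refine tendsto_order.2 ⟨fun a' ha' ↦ ?_, fun a' ha' ↦ ?_⟩
  · obtain ⟨m, hm, hmc⟩ := exists_between (max_lt ha' hlc)
    have := eventually_le_trajectory_of_pos_on_Icc hb ((le_max_right _ _).trans hm.le)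
      (hF.mono (Icc_subset_Ioo hal (hmc.trans hcd)))
      (fun x hx ↦ hpos x ⟨hal.trans_le hx.1, hx.2.trans_lt hmc⟩) fun t ht ↦ (hbounds t ht).1
    filter_upwards [this] with t ht using ((le_max_left _ _).trans_lt hm).trans_le ht
  · obtain ⟨m, hcm, hm⟩ := exists_between (lt_min ha' hcu)
    have := eventually_trajectory_le_of_neg_on_Icc hb (hm.le.trans (min_le_right _ _))
      (hF.mono (Icc_subset_Ioo (hac.trans hcm) hud))
      (fun x hx ↦ hneg x ⟨hcm.trans_le hx.1, hx.2.trans_lt hud⟩) fun t ht ↦ (hbounds t ht).2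
    filter_upwards [this] with t ht using ht.trans_lt (hm.trans_le (min_le_left _ _))

theorem trajectory_eq_of_eq_zero (hb : ∀ t, HasDerivAt b (F (b t)) t) {s : Set ℝ} {L : ℝ≥0}
    (hF : LipschitzOnWith L F s) (hs : ∀ t ≥ 0, b t ∈ s) (h₀ : F (b 0) = 0) {t : ℝ}
    (ht : 0 ≤ t) : b t = b 0 :=
  ODE_solution_unique_of_mem_Icc_right (v := fun _ ↦ F) (s := fun _ ↦ s) (g := fun _ ↦ b 0)
    (fun _ _ ↦ hF) (fun τ _ ↦ (hb τ).continuousAt.continuousWithinAt)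
    (fun τ _ ↦ (hb τ).hasDerivWithinAt) (fun τ hτ ↦ hs τ hτ.1) continuousOn_const
    (fun _ _ ↦ by rw [h₀]; exact hasDerivWithinAt_const _ _ _) (fun _ _ ↦ hs 0 le_rfl) rfl
    ⟨ht, le_rfl⟩

end Trajectory

noncomputable def growthRate (α β K N x : ℝ) : ℝ := α * x * (1 - x / N) - β * K * x / (K + x)

theorem contDiffOn_growthRate {α β K N : ℝ} : ContDiffOn ℝ 1 (growthRate α β K N) (Ioi (-K)) := by
  unfold growthRate
  fun_prop (disch := intro x hx; exact (neg_lt_iff_pos_add'.1 hx).ne')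

/-- `b₁ < b₂` are the positive zeros of `growthRate α β K N`, encoded by Vieta's relations for
its quadratic factor `-x² + (N - K) x - K N (β / α - 1) = (x - b₁) * (b₂ - x)`. -/
structure GrowthRoots (α β K N b₁ b₂ : ℝ) : Prop where
  pos : 0 < b₁
  lt : b₁ < b₂
  add : b₁ + b₂ = N - K
  mul : α * (b₁ * b₂) = K * N * (β - α)

theorem growthRoots_of_discriminant_pos {α β K N q n b₁ b₂ : ℝ} (hα : 0 < α) (hK : 0 < K)
    (hβα : α < β) (hKN : K < N) (hq : q = N / K) (hn : n = β / α)
    (hD : 0 < (q - 1) ^ 2 - 4 * q * (n - 1))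
    (hb₁ : b₁ = K / 2 * ((q - 1) - Real.sqrt ((q - 1) ^ 2 - 4 * q * (n - 1))))
    (hb₂ : b₂ = K / 2 * ((q - 1) + Real.sqrt ((q - 1) ^ 2 - 4 * q * (n - 1)))) :
    GrowthRoots α β K N b₁ b₂ := by
  set s := Real.sqrt ((q - 1) ^ 2 - 4 * q * (n - 1))
  have hs : s ^ 2 = (q - 1) ^ 2 - 4 * q * (n - 1) := Real.sq_sqrt hD.le
  have hs₀ : 0 < s := Real.sqrt_pos.2 hD
  have hKq : K * q = N := by rw [hq, mul_div_cancel₀ _ hK.ne']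
  have hαn : α * n = β := by rw [hn, mul_div_cancel₀ _ hα.ne']
  have hq₁ : 1 < q := by rw [hq]; exact (one_lt_div hK).2 hKN
  have hn₁ : 1 < n := by rw [hn]; exact (one_lt_div hα).2 hβα
  subst hb₁ hb₂
  refine ⟨mul_pos (half_pos hK) (sub_pos.2 ?_), by nlinarith, by linear_combination hKq, ?_⟩
  · nlinarith
  · linear_combination (-(α * K ^ 2) / 4) * hs + (α * K * (n - 1)) * hKq + K * N * hαn

namespace GrowthRoots

variable {α β K N b₁ b₂ x : ℝ}

theorem growthRate_eq (hr : GrowthRoots α β K N b₁ b₂) (hN : N ≠ 0) (hx : K + x ≠ 0) :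
    growthRate α β K N x = α * x * ((x - b₁) * (b₂ - x)) / (N * (K + x)) := by
  rw [eq_div_iff (mul_ne_zero hN hx), growthRate]
  field_simp
  linear_combination (-(α * x ^ 2)) * hr.add + x * hr.mul

theorem growthRate_lower_root (hr : GrowthRoots α β K N b₁ b₂) (hK : 0 < K) (hN : 0 < N) :
    growthRate α β K N b₁ = 0 := by
  simp [hr.growthRate_eq hN.ne' (by linarith [hr.pos] : 0 < K + b₁).ne']

theorem growthRate_pos_of_mem_Ioo_neg (hr : GrowthRoots α β K N b₁ b₂) (hα : 0 < α)
    (hN : 0 < N) (hx : x ∈ Ioo (-K) 0) : 0 < growthRate α β K N x := by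
  rw [hr.growthRate_eq hN.ne' (neg_lt_iff_pos_add'.1 hx.1).ne']
  refine div_pos (mul_pos_of_neg_of_neg (mul_neg_of_pos_of_neg hα hx.2) ?_)
    (mul_pos hN (neg_lt_iff_pos_add'.1 hx.1))
  exact mul_neg_of_neg_of_pos (by linarith [hx.2, hr.pos]) (by linarith [hx.2, hr.pos, hr.lt])

theorem growthRate_neg_of_mem_Ioo_zero (hr : GrowthRoots α β K N b₁ b₂) (hα : 0 < α)
    (hK : 0 < K) (hN : 0 < N) (hx : x ∈ Ioo 0 b₁) : growthRate α β K N x < 0 := by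
  rw [hr.growthRate_eq hN.ne' (by linarith [hx.1] : 0 < K + x).ne']
  refine div_neg_of_neg_of_pos (mul_neg_of_pos_of_neg (mul_pos hα hx.1) ?_)
    (mul_pos hN (by linarith [hx.1]))
  exact mul_neg_of_neg_of_pos (sub_neg.2 hx.2) (by linarith [hx.2, hr.lt])

theorem growthRate_pos_of_mem_Ioo (hr : GrowthRoots α β K N b₁ b₂) (hα : 0 < α) (hK : 0 < K)
    (hN : 0 < N) (hx : x ∈ Ioo b₁ b₂) : 0 < growthRate α β K N x := by
  have hx₀ : 0 < x := hr.pos.trans hx.1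
  rw [hr.growthRate_eq hN.ne' (by linarith : 0 < K + x).ne']
  exact div_pos (mul_pos (mul_pos hα hx₀) (mul_pos (sub_pos.2 hx.1) (sub_pos.2 hx.2)))
    (mul_pos hN (by linarith))

theorem growthRate_neg_of_lt (hr : GrowthRoots α β K N b₁ b₂) (hα : 0 < α) (hK : 0 < K)
    (hN : 0 < N) (hx : b₂ < x) : growthRate α β K N x < 0 := by
  have hx₀ : 0 < x := (hr.pos.trans hr.lt).trans hx
  rw [hr.growthRate_eq hN.ne' (by linarith : 0 < K + x).ne']
  refine div_neg_of_neg_of_pos (mul_neg_of_pos_of_neg (mul_pos hα hx₀) ?_)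
    (mul_pos hN (by linarith))
  exact mul_neg_of_pos_of_neg (by linarith [hr.lt]) (sub_neg.2 hx)

variable {b : ℝ → ℝ}

theorem tendsto_upper_root (hr : GrowthRoots α β K N b₁ b₂) (hα : 0 < α) (hK : 0 < K)
    (hN : 0 < N) (hb : ∀ t, HasDerivAt b (growthRate α β K N (b t)) t) (h₀ : b₁ < b 0) :
    Tendsto b atTop (𝓝 b₂) :=
  tendsto_trajectory_of_sign_change hb (d := b 0 + b₂)
    (contDiffOn_growthRate.continuousOn.mono fun x hx ↦ mem_Ioi.2 (by linarith [hx.1, hr.pos]))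
    (fun _ ↦ hr.growthRate_pos_of_mem_Ioo hα hK hN)
    (fun _ hx ↦ hr.growthRate_neg_of_lt hα hK hN hx.1)
    hr.lt (by linarith [hr.pos]) ⟨h₀, by linarith [hr.pos, hr.lt]⟩

theorem tendsto_zero (hr : GrowthRoots α β K N b₁ b₂) (hα : 0 < α) (hK : 0 < K) (hN : 0 < N)
    (hb : ∀ t, HasDerivAt b (growthRate α β K N (b t)) t) (h₀ : 0 < b 0) (h₁ : b 0 < b₁) :
    Tendsto b atTop (𝓝 0) :=
  tendsto_trajectory_of_sign_change hb
    (contDiffOn_growthRate.continuousOn.mono Ioo_subset_Ioi_self)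
    (fun _ ↦ hr.growthRate_pos_of_mem_Ioo_neg hα hN)
    (fun _ ↦ hr.growthRate_neg_of_mem_Ioo_zero hα hK hN)
    (neg_lt_zero.2 hK) hr.pos ⟨by linarith, h₁⟩

theorem eq_lower_root (hr : GrowthRoots α β K N b₁ b₂) (hα : 0 < α) (hK : 0 < K) (hN : 0 < N)
    (hb : ∀ t, HasDerivAt b (growthRate α β K N (b t)) t) (h₀ : b 0 = b₁) {t : ℝ}
    (ht : 0 ≤ t) : b t = b₁ := by
  have hs τ (hτ : 0 ≤ τ) : b τ ∈ Icc (-K / 2) (b₂ + 1) :=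
    trajectory_mem_Icc hb (hr.growthRate_pos_of_mem_Ioo_neg hα hN ⟨by linarith, by linarith⟩)
      (hr.growthRate_neg_of_lt hα hK hN (lt_add_one b₂))
      ⟨by linarith [hr.pos], by linarith [hr.lt]⟩ hτ
  have hC : ContDiffOn ℝ 1 (growthRate α β K N) (Icc (-K / 2) (b₂ + 1)) :=
    contDiffOn_growthRate.mono fun x hx ↦ mem_Ioi.2 (by linarith [hx.1])
  obtain ⟨L, hL⟩ := hC.exists_lipschitzOnWith one_ne_zero (convex_Icc _ _) isCompact_Icc
  rw [← h₀]
  exact trajectory_eq_of_eq_zero hb hL hs (h₀ ▸ hr.growthRate_lower_root hK hN) ht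

end GrowthRoots

theorem immune_failure_above_threshold_general
    (α β K N : ℝ) (hα : 0 < α) (hK : 0 < K) (hN : 0 < N)
    (hβα : α < β) (hKN : K < N)
    (q n : ℝ) (hq : q = N / K) (hn : n = β / α)
    (hD : 0 < (q - 1) ^ 2 - 4 * q * (n - 1))
    (b₁ b₂ : ℝ)
    (hb₁ : b₁ = K / 2 * ((q - 1) - Real.sqrt ((q - 1) ^ 2 - 4 * q * (n - 1))))
    (hb₂ : b₂ = K / 2 * ((q - 1) + Real.sqrt ((q - 1) ^ 2 - 4 * q * (n - 1))))
    (b : ℝ → ℝ)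
    (hode : ∀ t : ℝ, HasDerivAt b
      (α * b t * (1 - b t / N) - β * K * b t / (K + b t)) t)
    (b₀ : ℝ) (hb0 : b 0 = b₀) (hb₀pos : 0 < b₀) :
    (b₁ < b₀ → Filter.Tendsto b Filter.atTop (nhds b₂)) ∧
      (¬ Filter.Tendsto b Filter.atTop (nhds 0) ↔ b₁ ≤ b₀) := by
  subst hb0
  have hr := growthRoots_of_discriminant_pos hα hK hβα hKN hq hn hD hb₁ hb₂
  have hb : ∀ t, HasDerivAt b (growthRate α β K N (b t)) t := hode
  have above := hr.tendsto_upper_root hα hK hN hb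
  refine ⟨above, fun h ↦ not_lt.1 fun h' ↦ h (hr.tendsto_zero hα hK hN hb hb₀pos h'), ?_⟩
  intro h htend
  rcases h.lt_or_eq with h | h
  · exact (hr.pos.trans hr.lt).ne' (tendsto_nhds_unique (above h) htend)
  · have hconst : Tendsto b atTop (𝓝 b₁) := tendsto_const_nhds.congr' <|
      eventually_atTop.2 ⟨0, fun t ht ↦ (hr.eq_lower_root hα hK hN hb h.symm ht).symm⟩
    exact hr.pos.ne' (tendsto_nhds_unique hconst htend)

theorem immune_failure_above_threshold
    (α β K N : ℝ) (hα : 0 < α) (hβ : 0 < β) (hK : 0 < K) (hN : 0 < N)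
    (hβα : α < β) (hKN : K < N)
    (q n : ℝ) (hq : q = N / K) (hn : n = β / α)
    (hD : 0 < (q - 1) ^ 2 - 4 * q * (n - 1))
    (b₁ b₂ : ℝ)
    (hb₁ : b₁ = K / 2 * ((q - 1) - Real.sqrt ((q - 1) ^ 2 - 4 * q * (n - 1))))
    (hb₂ : b₂ = K / 2 * ((q - 1) + Real.sqrt ((q - 1) ^ 2 - 4 * q * (n - 1))))
    (b : ℝ → ℝ)
    (hode : ∀ t : ℝ, HasDerivAt b
      (α * b t * (1 - b t / N) - β * K * b t / (K + b t)) t)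
    (b₀ : ℝ) (hb0 : b 0 = b₀) (hb₀pos : 0 < b₀) :
    (b₁ < b₀ → Filter.Tendsto b Filter.atTop (nhds b₂)) ∧
      (¬ Filter.Tendsto b Filter.atTop (nhds 0) ↔ b₁ ≤ b₀) :=
  immune_failure_above_threshold_general α β K N hα hK hN hβα hKN q n hq hn hD b₁ b₂ hb₁ hb₂ b hode
    b₀ hb0 hb₀pos
end

section
/- Under a viable therapy (u(t) ≥ u_M for all t), every equilibrium (b̄, s̄) of the system ḃ = α·b·(1 − b/N) − I(b)·b − D(u)·s, ṡ = α·s·(1 − b/N) − I(b)·s − D(u)·s − μ·s must satisfy s̄ = 0; consequently the equilibria are exactly (0,0), (b₁*, 0), (b₂*, 0). -/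
/-!
The `s`-equation reads `s · (α(1 - b/N) - I(b) - D(u) - μ) = 0`, and the per-capita rate is
negative because `α(1 - b/N) ≤ α ≤ D(u)`, `I(b) ≥ 0` and `μ > 0`; hence `s = 0`. With `s = 0`
the `b`-equation, after clearing denominators, is `b` times the quadratic
`x² - (q - 1)x + q(n - 1)` in `x = b/K`, whose roots are `b₁*/K` and `b₂*/K`.
-/

lemma eq_quadratic_roots_of_sq_sub_mul_add_eq_zero {x p r : ℝ}
    (h : x ^ 2 - p * x + r = 0) :
    x = (p - √(p ^ 2 - 4 * r)) / 2 ∨ x = (p + √(p ^ 2 - 4 * r)) / 2 := by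
  have hx : 1 * (x * x) + -p * x + r = 0 := by linear_combination h
  have hdisc : discrim 1 (-p) r = p ^ 2 - 4 * r := by rw [discrim]; ring
  have hnonneg : 0 ≤ p ^ 2 - 4 * r := hdisc ▸ discrim_eq_sq_of_quadratic_eq_zero hx ▸ sq_nonneg _
  have hsqrt : discrim 1 (-p) r = √(p ^ 2 - 4 * r) * √(p ^ 2 - 4 * r) := by
    rw [Real.mul_self_sqrt hnonneg, hdisc]
  rcases (quadratic_eq_zero_iff one_ne_zero hsqrt x).mp hx with h | h
  · right; linear_combination h
  · left; linear_combination h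

lemma per_capita_rate_neg {α β K N μ d b : ℝ} (hα : 0 ≤ α) (hβ : 0 ≤ β) (hK : 0 < K)
    (hN : 0 < N) (hμ : 0 < μ) (hb : 0 ≤ b) (hd : α ≤ d) :
    α * (1 - b / N) - β * K / (K + b) - d - μ < 0 := by
  have hlogistic : α * (1 - b / N) ≤ α :=
    mul_le_of_le_one_right hα (sub_le_self _ (div_nonneg hb hN.le))
  have himmune : 0 ≤ β * K / (K + b) := by positivity
  linarith

lemma eq_zero_or_quadratic_of_logistic_immune_eq_zero {α β K N b : ℝ} (hα : α ≠ 0)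
    (hK : K ≠ 0) (hN : N ≠ 0) (hKb : K + b ≠ 0)
    (h : α * b * (1 - b / N) - β * K / (K + b) * b = 0) :
    b = 0 ∨ (b / K) ^ 2 - (N / K - 1) * (b / K) + N / K * (β / α - 1) = 0 := by
  have hprod : b * ((b / K) ^ 2 - (N / K - 1) * (b / K) + N / K * (β / α - 1)) = 0 := by
    field_simp at h ⊢
    linear_combination -h
  exact mul_eq_zero.mp hprod

theorem equilibria_under_viable_therapy_general
    (α β K N μ uM : ℝ) (hα : 0 < α) (hβ : 0 < β) (hK : 0 < K) (hN : 0 < N)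
    (hμ : 0 < μ)
    (q n : ℝ) (hq : q = N / K) (hn : n = β / α)
    (b₁ b₂ : ℝ)
    (hb₁ : b₁ = K / 2 * ((q - 1) - Real.sqrt ((q - 1) ^ 2 - 4 * q * (n - 1))))
    (hb₂ : b₂ = K / 2 * ((q - 1) + Real.sqrt ((q - 1) ^ 2 - 4 * q * (n - 1))))
    (Dfun : ℝ → ℝ) (hDα : ∀ v, uM ≤ v → α ≤ Dfun v)
    (v : ℝ) (hv : uM ≤ v)
    (bEq sEq : ℝ) (hbEq : 0 ≤ bEq)
    (heqb : α * bEq * (1 - bEq / N) - (β * K / (K + bEq)) * bEq - Dfun v * sEq = 0)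
    (heqs : α * sEq * (1 - bEq / N) - (β * K / (K + bEq)) * sEq
      - Dfun v * sEq - μ * sEq = 0) :
    sEq = 0 ∧ (bEq = 0 ∨ bEq = b₁ ∨ bEq = b₂) := by
  have hs : sEq = 0 := by
    have hrate := per_capita_rate_neg hα.le hβ.le hK hN hμ hbEq (hDα v hv)
    have hfactor : sEq * (α * (1 - bEq / N) - β * K / (K + bEq) - Dfun v - μ) = 0 := by
      linear_combination heqs
    exact (mul_eq_zero.mp hfactor).resolve_right hrate.ne
  subst hs
  refine ⟨rfl, ?_⟩
  have hb : α * bEq * (1 - bEq / N) - β * K / (K + bEq) * bEq = 0 := by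
    linear_combination heqb
  rcases eq_zero_or_quadratic_of_logistic_immune_eq_zero hα.ne' hK.ne' hN.ne'
      (by positivity) hb with h0 | hquad
  · exact Or.inl h0
  rw [← hq, ← hn] at hquad
  have hbK : bEq = K * (bEq / K) := by field_simp
  rcases eq_quadratic_roots_of_sq_sub_mul_add_eq_zero hquad with h | h
  · exact Or.inr (Or.inl (by rw [hbK, h, hb₁, mul_assoc]; ring))
  · exact Or.inr (Or.inr (by rw [hbK, h, hb₂, mul_assoc]; ring))

theorem equilibria_under_viable_therapy
    (α β K N μ uM : ℝ) (hα : 0 < α) (hβ : 0 < β) (hK : 0 < K) (hN : 0 < N)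
    (hμ : 0 < μ) (huM : 0 < uM) (hβα : α < β) (hKN : K < N)
    (q n : ℝ) (hq : q = N / K) (hn : n = β / α)
    (hD : 0 < (q - 1) ^ 2 - 4 * q * (n - 1))
    (b₁ b₂ : ℝ)
    (hb₁ : b₁ = K / 2 * ((q - 1) - Real.sqrt ((q - 1) ^ 2 - 4 * q * (n - 1))))
    (hb₂ : b₂ = K / 2 * ((q - 1) + Real.sqrt ((q - 1) ^ 2 - 4 * q * (n - 1))))
    (Dfun : ℝ → ℝ) (hDα : ∀ v, uM ≤ v → α ≤ Dfun v)
    (v : ℝ) (hv : uM ≤ v)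
    (bEq sEq : ℝ) (hbEq : 0 ≤ bEq) (hbEqN : bEq ≤ N) (hsEq : 0 ≤ sEq)
    (heqb : α * bEq * (1 - bEq / N) - (β * K / (K + bEq)) * bEq - Dfun v * sEq = 0)
    (heqs : α * sEq * (1 - bEq / N) - (β * K / (K + bEq)) * sEq
      - Dfun v * sEq - μ * sEq = 0) :
    sEq = 0 ∧ (bEq = 0 ∨ bEq = b₁ ∨ bEq = b₂) :=
  equilibria_under_viable_therapy_general α β K N μ uM hα hβ hK hN hμ q n hq hn b₁ b₂ hb₁ hb₂ Dfun
    hDα v hv bEq sEq hbEq heqb heqs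
end

section
/- There exists ε* > 0 such that the horizontal segment {(b, ε*) : b ∈ [b₁*, b₂*]} intersects the graph of ψ at exactly two points. -/
/-!
Since `b₁ + b₂ = N - K` and `α b₁ b₂ = K N (β - α)`, on `[b₁, b₂]` we have
`ψ z = a · z (z - b₁)(b₂ - z) / (K + z)` with `a = α / (N Dmax) > 0`. It vanishes at the
endpoints and is positive inside, so by the intermediate value theorem every level `ε` below an
interior value is attained once on each side of that point. Conversely, `ψ z = ε` is the cubic
equation `a z (z - b₁)(b₂ - z) = ε (K + z)`, which always has a root in `(-K, 0)`; hence it has at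
most two roots in `[b₁, b₂] ⊆ [0, ∞)`.
-/

open Set Polynomial

theorem Polynomial.eq_or_eq_of_isRoot_of_natDegree_le_three {R : Type*} [CommRing R] [IsDomain R]
    {p : R[X]} (hp : p ≠ 0) (hdeg : p.natDegree ≤ 3) {r x y z : R} (hr : p.IsRoot r)
    (hx : p.IsRoot x) (hy : p.IsRoot y) (hz : p.IsRoot z) (hrx : r ≠ x) (hry : r ≠ y)
    (hrz : r ≠ z) (hxy : x ≠ y) : z = x ∨ z = y := by
  classical
  by_contra! hzxy
  have hsub : ({r, x, y, z} : Finset R).val ⊆ p.roots := by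
    intro t ht
    simp only [Finset.insert_val, Finset.singleton_val, Multiset.mem_ndinsert,
      Multiset.mem_singleton] at ht
    rw [mem_roots hp]
    rcases ht with rfl | rfl | rfl | rfl <;> assumption
  have hcard : ({r, x, y, z} : Finset R).card = 4 := by
    rw [Finset.card_insert_of_notMem (by simp [hrx, hry, hrz]),
      Finset.card_insert_of_notMem (by simp [hxy, hzxy.1.symm]),
      Finset.card_pair hzxy.2.symm]
  have := card_le_degree_of_subset_roots hsub
  omega

theorem exists_lt_eq_half_of_continuousOn_Icc {f : ℝ → ℝ} {a b m : ℝ}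
    (hf : ContinuousOn f (Icc a b)) (ha : f a = 0) (hb : f b = 0) (hm : m ∈ Icc a b)
    (hfm : 0 < f m) :
    ∃ x ∈ Icc a b, ∃ y ∈ Icc a b, x < y ∧ f x = f m / 2 ∧ f y = f m / 2 := by
  have hlevel : f m / 2 ∈ Icc 0 (f m) := ⟨by positivity, by linarith⟩
  obtain ⟨x, hx, hfx⟩ := intermediate_value_Icc hm.1 (hf.mono (Icc_subset_Icc le_rfl hm.2))
    (ha ▸ hlevel)
  obtain ⟨y, hy, hfy⟩ := intermediate_value_Icc' hm.2 (hf.mono (Icc_subset_Icc hm.1 le_rfl))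
    (hb ▸ hlevel)
  have hxm : x ≠ m := by rintro rfl; linarith
  exact ⟨x, ⟨hx.1, hx.2.trans hm.2⟩, y, ⟨hm.1.trans hy.1, hy.2⟩,
    (lt_of_le_of_ne hx.2 hxm).trans_le hy.1, hfx, hfy⟩

section CubicOverLinear

variable {a K b₁ b₂ ε : ℝ}

theorem exists_neg_root_cubic_eq (ha : 0 < a) (hK : 0 < K) (hb₁ : 0 ≤ b₁) (hb₂ : 0 ≤ b₂)
    (hε : 0 < ε) :
    ∃ r ∈ Ioo (-K) 0, a * r * (r - b₁) * (b₂ - r) - ε * (K + r) = 0 := by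
  have hcont : ContinuousOn (fun r => a * r * (r - b₁) * (b₂ - r) - ε * (K + r)) (Icc (-K) 0) :=
    by fun_prop
  have hsign : (0 : ℝ) ∈ Ioo (a * 0 * (0 - b₁) * (b₂ - 0) - ε * (K + 0))
      (a * -K * (-K - b₁) * (b₂ - -K) - ε * (K + -K)) := by
    constructor
    · nlinarith [mul_pos hε hK]
    · have : 0 < a * K * (K + b₁) * (K + b₂) := by positivity
      linarith
  exact intermediate_value_Ioo' (by linarith) hcont hsign

theorem eq_or_eq_of_cubic_eq (ha : 0 < a) (hK : 0 < K) (hb₁ : 0 ≤ b₁) (hb₂ : 0 ≤ b₂)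
    (hε : 0 < ε) {x y z : ℝ} (hx₀ : 0 ≤ x) (hy₀ : 0 ≤ y) (hz₀ : 0 ≤ z) (hxy : x ≠ y)
    (hx : a * x * (x - b₁) * (b₂ - x) - ε * (K + x) = 0)
    (hy : a * y * (y - b₁) * (b₂ - y) - ε * (K + y) = 0)
    (hz : a * z * (z - b₁) * (b₂ - z) - ε * (K + z) = 0) :
    z = x ∨ z = y := by
  set p : ℝ[X] := C a * X * (X - C b₁) * (C b₂ - X) - C ε * (C K + X)
  have heval : ∀ t, p.eval t = a * t * (t - b₁) * (b₂ - t) - ε * (K + t) := fun t => by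
    simp [p]
  have hp : p ≠ 0 := by
    intro h
    have := heval 0
    rw [h, eval_zero] at this
    nlinarith [mul_pos hε hK]
  have hdeg : p.natDegree ≤ 3 := by simp only [p]; compute_degree
  have hroot : ∀ t, a * t * (t - b₁) * (b₂ - t) - ε * (K + t) = 0 → p.IsRoot t := fun t ht => by
    rwa [IsRoot, heval]
  obtain ⟨r, hr, hr₀⟩ := exists_neg_root_cubic_eq ha hK hb₁ hb₂ hε
  exact eq_or_eq_of_isRoot_of_natDegree_le_three hp hdeg (hroot r hr₀) (hroot x hx)
    (hroot y hy) (hroot z hz) (hr.2.trans_le hx₀).ne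
    (hr.2.trans_le hy₀).ne (hr.2.trans_le hz₀).ne hxy

theorem exists_two_point_level_set (ha : 0 < a) (hK : 0 < K) (hb₁ : 0 ≤ b₁) (hb : b₁ < b₂)
    {f : ℝ → ℝ} (hf : ∀ z ∈ Icc b₁ b₂, f z = a * z * (z - b₁) * (b₂ - z) / (K + z)) :
    ∃ ε : ℝ, 0 < ε ∧ ∃ x y : ℝ, x ∈ Icc b₁ b₂ ∧ y ∈ Icc b₁ b₂ ∧
      x ≠ y ∧ f x = ε ∧ f y = ε ∧ ∀ z ∈ Icc b₁ b₂, f z = ε → z = x ∨ z = y := by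
  have hpos : ∀ z ∈ Icc b₁ b₂, 0 < K + z := fun z hz => by linarith [hz.1]
  have hcont : ContinuousOn f (Icc b₁ b₂) := by
    refine ContinuousOn.congr ?_ hf
    exact ContinuousOn.div (by fun_prop) (by fun_prop) fun z hz => (hpos z hz).ne'
  have hmid : (b₁ + b₂) / 2 ∈ Icc b₁ b₂ := ⟨by linarith, by linarith⟩
  have hfmid : 0 < f ((b₁ + b₂) / 2) := by
    rw [hf _ hmid]
    have := hpos _ hmid
    apply div_pos _ this
    apply mul_pos (mul_pos (mul_pos ha _) _) _ <;> linarith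
  obtain ⟨x, hx, y, hy, hxy, hfx, hfy⟩ := exists_lt_eq_half_of_continuousOn_Icc hcont
    (by simp [hf b₁ ⟨le_rfl, hb.le⟩]) (by simp [hf b₂ ⟨hb.le, le_rfl⟩]) hmid hfmid
  set ε := f ((b₁ + b₂) / 2) / 2
  have hcubic : ∀ z ∈ Icc b₁ b₂, f z = ε → a * z * (z - b₁) * (b₂ - z) - ε * (K + z) = 0 := by
    intro z hz hfz
    rw [hf z hz, div_eq_iff (hpos z hz).ne'] at hfz
    linarith
  refine ⟨ε, by positivity, x, y, hx, hy, hxy.ne, hfx, hfy, fun z hz hfz => ?_⟩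
  exact eq_or_eq_of_cubic_eq ha hK hb₁ (hb₁.trans hb.le) (by positivity) (hb₁.trans hx.1)
    (hb₁.trans hy.1) (hb₁.trans hz.1) hxy.ne (hcubic x hx hfx) (hcubic y hy hfy) (hcubic z hz hfz)

end CubicOverLinear

theorem horizontal_segment_two_intersections_general
    (α β K N Dmax : ℝ) (hα : 0 < α) (hK : 0 < K)
    (hDmax : 0 < Dmax) (hβα : α < β) (hKN : K < N)
    (q n : ℝ) (hq : q = N / K) (hn : n = β / α)
    (hD : 0 < (q - 1) ^ 2 - 4 * q * (n - 1))
    (b₁ b₂ : ℝ)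
    (hb₁ : b₁ = K / 2 * ((q - 1) - Real.sqrt ((q - 1) ^ 2 - 4 * q * (n - 1))))
    (hb₂ : b₂ = K / 2 * ((q - 1) + Real.sqrt ((q - 1) ^ 2 - 4 * q * (n - 1))))
    (ψ : ℝ → ℝ)
    (hψ : ∀ b : ℝ, ψ b = (α * b * (1 - b / N) - β * K * b / (K + b)) / Dmax) :
    ∃ ε : ℝ, 0 < ε ∧ ∃ x y : ℝ, x ∈ Set.Icc b₁ b₂ ∧ y ∈ Set.Icc b₁ b₂ ∧
      x ≠ y ∧ ψ x = ε ∧ ψ y = ε ∧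
      ∀ z ∈ Set.Icc b₁ b₂, ψ z = ε → z = x ∨ z = y := by
  have hN : 0 < N := hK.trans hKN
  set s := Real.sqrt ((q - 1) ^ 2 - 4 * q * (n - 1))
  have hs2 : s ^ 2 = (q - 1) ^ 2 - 4 * q * (n - 1) := Real.sq_sqrt hD.le
  have hs : 0 < s := Real.sqrt_pos.mpr hD
  have hqK : q * K = N := by rw [hq]; field_simp
  have hnα : n * α = β := by rw [hn]; field_simp
  have hq1 : 1 < q := by rw [hq, lt_div_iff₀ hK]; linarith
  have hn1 : 1 < n := by rw [hn, lt_div_iff₀ hα]; linarith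
  have hsum : b₁ + b₂ = N - K := by rw [hb₁, hb₂]; linear_combination hqK
  have hprod : α * (b₁ * b₂) = K * N * (β - α) := by
    rw [hb₁, hb₂]
    linear_combination (-α * K ^ 2 / 4) * hs2 + (α * K * (n - 1)) * hqK + (K * N) * hnα
  have hs_lt : s < q - 1 := by nlinarith
  have hb₁₀ : 0 ≤ b₁ := by rw [hb₁]; exact mul_nonneg (by positivity) (by linarith)
  have hb : b₁ < b₂ := by rw [hb₁, hb₂]; exact mul_lt_mul_of_pos_left (by linarith) (by positivity)
  refine exists_two_point_level_set (a := α / (N * Dmax)) (by positivity) hK hb₁₀ hb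
    fun z hz => ?_
  have hKz : K + z ≠ 0 := by linarith [hz.1]
  rw [hψ]
  field_simp
  linear_combination (-(α * z ^ 2)) * hsum + z * hprod

theorem horizontal_segment_two_intersections
    (α β K N Dmax : ℝ) (hα : 0 < α) (hβ : 0 < β) (hK : 0 < K) (hN : 0 < N)
    (hDmax : 0 < Dmax) (hβα : α < β) (hKN : K < N)
    (q n : ℝ) (hq : q = N / K) (hn : n = β / α)
    (hD : 0 < (q - 1) ^ 2 - 4 * q * (n - 1))
    (b₁ b₂ : ℝ)
    (hb₁ : b₁ = K / 2 * ((q - 1) - Real.sqrt ((q - 1) ^ 2 - 4 * q * (n - 1))))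
    (hb₂ : b₂ = K / 2 * ((q - 1) + Real.sqrt ((q - 1) ^ 2 - 4 * q * (n - 1))))
    (ψ : ℝ → ℝ)
    (hψ : ∀ b : ℝ, ψ b = (α * b * (1 - b / N) - β * K * b / (K + b)) / Dmax) :
    ∃ ε : ℝ, 0 < ε ∧ ∃ x y : ℝ, x ∈ Set.Icc b₁ b₂ ∧ y ∈ Set.Icc b₁ b₂ ∧
      x ≠ y ∧ ψ x = ε ∧ ψ y = ε ∧
      ∀ z ∈ Set.Icc b₁ b₂, ψ z = ε → z = x ∨ z = y :=
  horizontal_segment_two_intersections_general α β K N Dmax hα hK hDmax hβα hKN q n hq hn hD b₁ b₂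
    hb₁ hb₂ ψ hψ
end

section
/- Consider the planar system under a viable therapy (D(u(t)) ∈ [α, D_max], M ≡ μ > 0). Suppose at some time t₀ the state (b(t₀), s(t₀)) lies in the success subset Ω̄₀ = {(b,s) : 0 ≤ s ≤ b < b₁*}. Then for all t ≥ t₀ the trajectory remains in Ω̄₀ and b(t) → 0, s(t) → 0 as t → ∞. -/
/-!
Write `γ(b) = b · r(b)` with the per-capita rate `r(b) = α (1 - b/N) - β K / (K + b)`. Clearing
denominators, `N (K + b) r(b)` is `-α` times a quadratic whose smaller root is `b₁*`, so `r < 0`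
on `[0, b₁*)`. As long as `r(b) < 0`, each of `-s`, `s - b` (with
`(s - b)' = r(b) (s - b) - μ s`) and `b - b(t₀)` has nonpositive derivative wherever it is
positive, so none of them can become positive: the closed region `0 ≤ s ≤ b ≤ b(t₀)` is invariant,
first on short intervals (by continuity of `r ∘ b`) and then, by continuous induction, forever.
Inside it `ḃ ≤ b r(b)`, which is bounded away from `0` on `[ε, b(t₀)]`; so `b` drops below every
`ε > 0` and stays there, and `s` is squeezed between `0` and `b`.
-/

open Set Filter Topology

theorem image_nonpos_of_hasDerivAt_nonpos_of_pos {f f' : ℝ → ℝ} {a b : ℝ}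
    (hf : ∀ t ∈ Icc a b, HasDerivAt f (f' t) t) (ha : f a ≤ 0)
    (hf' : ∀ t ∈ Ico a b, 0 < f t → f' t ≤ 0) : ∀ t ∈ Icc a b, f t ≤ 0 := by
  -- fence `f` by the lines `ε * (t - a + 1)`, which are positive and increasing
  have fence : ∀ ε > 0, ∀ t ∈ Icc a b, f t ≤ ε * (t - a + 1) := fun ε hε =>
    image_le_of_deriv_right_lt_deriv_boundary
      (fun t ht => (hf t ht).continuousAt.continuousWithinAt)
      (fun t ht => (hf t (Ico_subset_Icc_self ht)).hasDerivWithinAt)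
      (by linarith) (fun t => (((hasDerivAt_id t).sub_const a).add_const 1).const_mul ε)
      (fun t ht hft => by
        have := hf' t ht (hft ▸ mul_pos hε (by linarith [ht.1]))
        linarith)
  intro t ht
  have ht' : 0 < t - a + 1 := by linarith [ht.1]
  refine le_of_forall_pos_le_add fun ε hε => ?_
  have := fence (ε / (t - a + 1)) (div_pos hε ht') t ht
  rwa [div_mul_cancel₀ _ ht'.ne', ← zero_add ε] at this

theorem exists_ge_lt_of_hasDerivAt_le {f f' g : ℝ → ℝ} {a c ε : ℝ}
    (hf : ∀ t, HasDerivAt f (f' t) t) (hmem : ∀ t ≥ a, f t ∈ Icc 0 c)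
    (hf' : ∀ t ≥ a, f' t ≤ g (f t)) (hg : ContinuousOn g (Icc ε c))
    (hneg : ∀ x ∈ Icc ε c, g x < 0) : ∃ T ≥ a, f T < ε := by
  by_contra! hge
  obtain ⟨x₀, hx₀, hmax⟩ := isCompact_Icc.exists_isMaxOn
    ⟨f a, hge a le_rfl, (hmem a le_rfl).2⟩ hg
  have hm := hneg x₀ hx₀
  have drift : ∀ t ≥ a, f t ≤ f a + g x₀ * (t - a) := fun t ht =>
    image_le_of_deriv_right_le_deriv_boundary (b := t)
      (fun u _ => (hf u).continuousAt.continuousWithinAt)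
      (fun u _ => (hf u).hasDerivWithinAt) (by simp)
      (by fun_prop) (fun u _ => (((hasDerivAt_id u).sub_const a).const_mul (g x₀)).const_add _
        |>.hasDerivWithinAt)
      (fun u hu => by
        have := hmax ⟨hge u hu.1, (hmem u hu.1).2⟩
        simp only [mul_one]
        exact (hf' u hu.1).trans this) ⟨ht, le_rfl⟩
  have hfa := hmem a le_rfl
  have hstep : 0 ≤ (c + 1) / -g x₀ := div_nonneg (by linarith [hfa.1, hfa.2]) (neg_pos.2 hm).le
  have hT := drift (a + (c + 1) / -g x₀) (by linarith)
  have hdrop : g x₀ * ((c + 1) / -g x₀) = -(c + 1) := by field_simp [hm.ne]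
  rw [add_sub_cancel_left, hdrop] at hT
  linarith [(hmem (a + (c + 1) / -g x₀) (by linarith)).1, hfa.2]

theorem tendsto_zero_of_hasDerivAt_le {f f' g : ℝ → ℝ} {a c : ℝ}
    (hf : ∀ t, HasDerivAt f (f' t) t) (hmem : ∀ t ≥ a, f t ∈ Icc 0 c)
    (hf' : ∀ t ≥ a, f' t ≤ g (f t)) (hg : ContinuousOn g (Icc 0 c))
    (hneg : ∀ x ∈ Ioc 0 c, g x < 0) : Tendsto f atTop (𝓝 0) := by
  refine tendsto_order.2 ⟨fun l hl => eventually_atTop.2 ⟨a, fun t ht => hl.trans_le (hmem t ht).1⟩,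
    fun ε hε => ?_⟩
  obtain ⟨T, hTa, hT⟩ := exists_ge_lt_of_hasDerivAt_le hf hmem hf'
    (hg.mono (Icc_subset_Icc_left hε.le)) fun x hx => hneg x ⟨hε.trans_le hx.1, hx.2⟩
  have stay : ∀ t ≥ T, f t - f T ≤ 0 := fun t ht =>
    image_nonpos_of_hasDerivAt_nonpos_of_pos (fun u _ => (hf u).sub_const (f T)) (by simp)
      (fun u hu hpos => (hf' u (hTa.trans hu.1)).trans
        (hneg _ ⟨(hmem T hTa).1.trans_lt (sub_pos.1 hpos), (hmem u (hTa.trans hu.1)).2⟩).le)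
      t ⟨ht, le_rfl⟩
  exact eventually_atTop.2 ⟨T, fun t ht => by linarith [stay t ht]⟩

def successRegion (c : ℝ) : Set (ℝ × ℝ) := {p | 0 ≤ p.2 ∧ p.2 ≤ p.1 ∧ p.1 ≤ c}

@[simp]
theorem mk_mem_successRegion {c x y : ℝ} :
    (x, y) ∈ successRegion c ↔ 0 ≤ y ∧ y ≤ x ∧ x ≤ c := Iff.rfl

theorem isClosed_successRegion (c : ℝ) : IsClosed (successRegion c) :=
  (isClosed_le continuous_const continuous_snd).inter
    ((isClosed_le continuous_snd continuous_fst).inter (isClosed_le continuous_fst continuous_const))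

section PlanarSystem

variable {r D b s : ℝ → ℝ} {μ c : ℝ}

theorem mem_successRegion_of_rate_neg
    (hb : ∀ t, HasDerivAt b (r (b t) * b t - D t * s t) t)
    (hs : ∀ t, HasDerivAt s ((r (b t) - D t - μ) * s t) t)
    (hμ : 0 ≤ μ) (hD : ∀ t, 0 ≤ D t) {τ T : ℝ}
    (hτ : (b τ, s τ) ∈ successRegion c) (hr : ∀ u ∈ Icc τ T, r (b u) < 0) :
    ∀ u ∈ Icc τ T, (b u, s u) ∈ successRegion c := by
  rw [mk_mem_successRegion] at hτ
  have s_nonneg : ∀ u ∈ Icc τ T, 0 ≤ s u := fun u hu => by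
    have := image_nonpos_of_hasDerivAt_nonpos_of_pos (f := fun v => -s v)
      (fun v _ => ((hs v).neg).congr_deriv (neg_mul_eq_mul_neg _ _)) (by linarith [hτ.1])
      (fun v hv hpos => mul_nonpos_of_nonpos_of_nonneg
        (by linarith [hr v (Ico_subset_Icc_self hv), hD v]) hpos.le) u hu
    linarith
  have s_le_b : ∀ u ∈ Icc τ T, s u ≤ b u := fun u hu => by
    have := image_nonpos_of_hasDerivAt_nonpos_of_pos
      (f := fun v => s v - b v) (f' := fun v => r (b v) * (s v - b v) - μ * s v)
      (fun v _ => ((hs v).sub (hb v)).congr_deriv (by ring)) (by linarith [hτ.2.1])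
      (fun v hv hpos => by
        have hv' := Ico_subset_Icc_self hv
        nlinarith [hr v hv', s_nonneg v hv']) u hu
    linarith
  have b_le : ∀ u ∈ Icc τ T, b u ≤ b τ := fun u hu => by
    have := image_nonpos_of_hasDerivAt_nonpos_of_pos (f := fun v => b v - b τ)
      (fun v _ => (hb v).sub_const (b τ)) (by simp)
      (fun v hv _ => by
        have hv' := Ico_subset_Icc_self hv
        nlinarith [hr v hv', s_nonneg v hv', s_le_b v hv', hD v]) u hu
    linarith
  exact fun u hu => ⟨s_nonneg u hu, s_le_b u hu, (b_le u hu).trans hτ.2.2⟩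

theorem mem_successRegion_of_ge
    (hb : ∀ t, HasDerivAt b (r (b t) * b t - D t * s t) t)
    (hs : ∀ t, HasDerivAt s ((r (b t) - D t - μ) * s t) t)
    (hμ : 0 ≤ μ) (hD : ∀ t, 0 ≤ D t)
    (hr : ∀ x ∈ Icc 0 c, r x < 0) (hrc : ∀ x ∈ Icc 0 c, ContinuousAt r x) {t₀ : ℝ}
    (h₀ : (b t₀, s t₀) ∈ successRegion c) : ∀ t ≥ t₀, (b t, s t) ∈ successRegion c := by
  have hbc : Continuous b := continuous_iff_continuousAt.2 fun t => (hb t).continuousAt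
  have hsc : Continuous s := continuous_iff_continuousAt.2 fun t => (hs t).continuousAt
  have hclosed : IsClosed {t | (b t, s t) ∈ successRegion c} :=
    (isClosed_successRegion c).preimage (hbc.prodMk hsc)
  intro t ht
  refine (hclosed.inter isClosed_Icc).Icc_subset_of_forall_mem_nhdsWithin h₀ ?_ ⟨ht, le_rfl⟩
  rintro τ ⟨hτ, -⟩
  have hbτ : b τ ∈ Icc 0 c := ⟨hτ.1.trans hτ.2.1, hτ.2.2⟩
  have hneg : ∀ᶠ u in 𝓝[≥] τ, r (b u) < 0 := nhdsWithin_le_nhds <|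
    ((hrc _ hbτ).comp hbc.continuousAt).eventually (gt_mem_nhds (hr _ hbτ))
  obtain ⟨T, hτT, hT⟩ := mem_nhdsGE_iff_exists_Icc_subset.1 hneg
  exact mem_of_superset (Icc_mem_nhdsGT hτT)
    (mem_successRegion_of_rate_neg hb hs hμ hD hτ hT)

theorem successRegion_invariant_and_tendsto
    (hb : ∀ t, HasDerivAt b (r (b t) * b t - D t * s t) t)
    (hs : ∀ t, HasDerivAt s ((r (b t) - D t - μ) * s t) t)
    (hμ : 0 ≤ μ) (hD : ∀ t, 0 ≤ D t)
    (hr : ∀ x ∈ Icc 0 c, r x < 0) (hrc : ∀ x ∈ Icc 0 c, ContinuousAt r x) {t₀ : ℝ}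
    (h₀ : (b t₀, s t₀) ∈ successRegion c) :
    (∀ t ≥ t₀, (b t, s t) ∈ successRegion c) ∧
      Tendsto b atTop (𝓝 0) ∧ Tendsto s atTop (𝓝 0) := by
  have hinv := mem_successRegion_of_ge hb hs hμ hD hr hrc h₀
  have hbs : ∀ t ≥ t₀, 0 ≤ s t ∧ s t ≤ b t := fun t ht => ⟨(hinv t ht).1, (hinv t ht).2.1⟩
  have hb0 : Tendsto b atTop (𝓝 0) :=
    tendsto_zero_of_hasDerivAt_le hb (g := fun x => r x * x)
      (fun t ht => ⟨(hbs t ht).1.trans (hbs t ht).2, (hinv t ht).2.2⟩)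
      (fun t ht => sub_le_self _ (mul_nonneg (hD t) (hbs t ht).1))
      (fun x hx => ((hrc x hx).mul continuousAt_id).continuousWithinAt)
      (fun x hx => mul_neg_of_neg_of_pos (hr x (Ioc_subset_Icc_self hx)) hx.1)
  exact ⟨hinv, hb0, tendsto_of_tendsto_of_tendsto_of_le_of_le' tendsto_const_nhds hb0
    (eventually_atTop.2 ⟨t₀, fun t ht => (hbs t ht).1⟩)
    (eventually_atTop.2 ⟨t₀, fun t ht => (hbs t ht).2⟩)⟩

end PlanarSystem

noncomputable def perCapitaGrowth (α β K N x : ℝ) : ℝ := α * (1 - x / N) - β * K / (K + x)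

theorem continuousAt_perCapitaGrowth {α β K N x : ℝ} (hx : K + x ≠ 0) :
    ContinuousAt (perCapitaGrowth α β K N) x := by
  unfold perCapitaGrowth
  fun_prop (disch := exact hx)

theorem perCapitaGrowth_neg {α β K N x : ℝ} (hα : 0 < α) (hK : 0 < K) (hN : 0 < N)
    (hdisc : 0 ≤ (N / K - 1) ^ 2 - 4 * (N / K) * (β / α - 1)) (hx : 0 ≤ x)
    (hxb : x < K / 2 * ((N / K - 1) - √((N / K - 1) ^ 2 - 4 * (N / K) * (β / α - 1)))) :
    perCapitaGrowth α β K N x < 0 := by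
  set S := √((N / K - 1) ^ 2 - 4 * (N / K) * (β / α - 1)) with hS
  have hS2 : α * K ^ 2 * S ^ 2 = α * (N - K) ^ 2 - 4 * K * N * (β - α) := by
    rw [hS, Real.sq_sqrt hdisc]
    field_simp
  have hKx : 0 < K + x := by linarith
  have hroot₁ : 0 < (N - K) - K * S - 2 * x := by
    have : K / 2 * ((N / K - 1) - S) = ((N - K) - K * S) / 2 := by field_simp
    linarith
  have hroot₂ : 0 < (N - K) + K * S - 2 * x := by
    nlinarith [mul_nonneg hK.le (Real.sqrt_nonneg _ : 0 ≤ S)]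
  have hfactor : 4 * (N * (K + x)) * perCapitaGrowth α β K N x
      = -(α * ((N - K) - K * S - 2 * x) * ((N - K) + K * S - 2 * x)) := by
    rw [perCapitaGrowth]
    field_simp
    linear_combination (-1 : ℝ) * hS2
  refine neg_of_mul_neg_right ?_ (by positivity : 0 ≤ 4 * (N * (K + x)))
  rw [hfactor, neg_neg_iff_pos]
  exact mul_pos (mul_pos hα hroot₁) hroot₂

theorem success_subset_invariant_and_convergent_general
    (α β K N μ Dmax : ℝ) (hα : 0 < α) (hK : 0 < K) (hN : 0 < N)
    (hμ : 0 < μ)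
    (q n : ℝ) (hq : q = N / K) (hn : n = β / α)
    (hD : 0 < (q - 1) ^ 2 - 4 * q * (n - 1))
    (b₁ : ℝ)
    (hb₁ : b₁ = K / 2 * ((q - 1) - Real.sqrt ((q - 1) ^ 2 - 4 * q * (n - 1))))
    (Du : ℝ → ℝ) (hDu : ∀ t, α ≤ Du t ∧ Du t ≤ Dmax)
    (b s : ℝ → ℝ)
    (hb : ∀ t : ℝ, HasDerivAt b
      (α * b t * (1 - b t / N) - (β * K / (K + b t)) * b t - Du t * s t) t)
    (hs : ∀ t : ℝ, HasDerivAt s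
      (α * s t * (1 - b t / N) - (β * K / (K + b t)) * s t
        - Du t * s t - μ * s t) t)
    (t₀ : ℝ) (hinit : 0 ≤ s t₀ ∧ s t₀ ≤ b t₀ ∧ b t₀ < b₁) :
    (∀ t : ℝ, t₀ ≤ t → 0 ≤ s t ∧ s t ≤ b t ∧ b t < b₁) ∧
      Filter.Tendsto b Filter.atTop (nhds 0) ∧
      Filter.Tendsto s Filter.atTop (nhds 0) := by
  subst hq hn hb₁
  have hb' : ∀ t, HasDerivAt b (perCapitaGrowth α β K N (b t) * b t - Du t * s t) t :=
    fun t => (hb t).congr_deriv (by rw [perCapitaGrowth]; ring)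
  have hs' : ∀ t, HasDerivAt s ((perCapitaGrowth α β K N (b t) - Du t - μ) * s t) t :=
    fun t => (hs t).congr_deriv (by rw [perCapitaGrowth]; ring)
  obtain ⟨hinv, hb0, hs0⟩ := successRegion_invariant_and_tendsto (c := b t₀) hb' hs' hμ.le
    (fun t => hα.le.trans (hDu t).1)
    (fun x hx => perCapitaGrowth_neg hα hK hN hD.le hx.1 (hx.2.trans_lt hinit.2.2))
    (fun x hx => continuousAt_perCapitaGrowth (by linarith [hx.1]))
    ⟨hinit.1, hinit.2.1, le_rfl⟩
  exact ⟨fun t ht => ⟨(hinv t ht).1, (hinv t ht).2.1, (hinv t ht).2.2.trans_lt hinit.2.2⟩,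
    hb0, hs0⟩

theorem success_subset_invariant_and_convergent
    (α β K N μ Dmax : ℝ) (hα : 0 < α) (hβ : 0 < β) (hK : 0 < K) (hN : 0 < N)
    (hμ : 0 < μ) (hDmax : α ≤ Dmax) (hβα : α < β) (hKN : K < N)
    (q n : ℝ) (hq : q = N / K) (hn : n = β / α)
    (hD : 0 < (q - 1) ^ 2 - 4 * q * (n - 1))
    (b₁ : ℝ)
    (hb₁ : b₁ = K / 2 * ((q - 1) - Real.sqrt ((q - 1) ^ 2 - 4 * q * (n - 1))))
    (Du : ℝ → ℝ) (hDu : ∀ t, α ≤ Du t ∧ Du t ≤ Dmax)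
    (b s : ℝ → ℝ)
    (hb : ∀ t : ℝ, HasDerivAt b
      (α * b t * (1 - b t / N) - (β * K / (K + b t)) * b t - Du t * s t) t)
    (hs : ∀ t : ℝ, HasDerivAt s
      (α * s t * (1 - b t / N) - (β * K / (K + b t)) * s t
        - Du t * s t - μ * s t) t)
    (t₀ : ℝ) (hinit : 0 ≤ s t₀ ∧ s t₀ ≤ b t₀ ∧ b t₀ < b₁) :
    (∀ t : ℝ, t₀ ≤ t → 0 ≤ s t ∧ s t ≤ b t ∧ b t < b₁) ∧
      Filter.Tendsto b Filter.atTop (nhds 0) ∧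
      Filter.Tendsto s Filter.atTop (nhds 0) :=
  success_subset_invariant_and_convergent_general α β K N μ Dmax hα hK hN hμ q n hq hn hD b₁ hb₁ Du
    hDu b s hb hs t₀ hinit
end
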